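/- Let Ω = ∏_{k=1}^m Ω_k be a product probability space and X a random variable on Ω that is uniformly difference-bounded by λ/m, i.e., changing any single coordinate changes X by at most λ/m. Let μ = E[X]. Then for any τ > 0, P(X - μ ≥ τ) ≤ exp(-2τ²m/λ²). -/

import Mathlib

/-!
Peel off one coordinate at a time. With the other coordinates frozen, `X` varies by at most `c₀`
in the first one, so by Hoeffding's lemma `X` minus its average over the first coordinate is
sub-Gaussian with parameter `(c₀ / 2) ^ 2`; that average again has bounded differences in the
remaining coordinates, and by Fubini the sub-Gaussian parameters of the two pieces add up.
Hence `X - E[X]` is sub-Gaussian with parameter `∑ k, (c k / 2) ^ 2`, and the Chernoff bound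
gives the tail estimate.
-/

open MeasureTheory Real ProbabilityTheory
open scoped NNReal

def HasBoundedDifferences {ι : Type*} {Ω : ι → Type*} (X : (∀ k, Ω k) → ℝ) (c : ι → ℝ) : Prop :=
  ∀ (k : ι) (ω ω' : ∀ k, Ω k), (∀ j, j ≠ k → ω j = ω' j) → |X ω - X ω'| ≤ c k

lemma exists_forall_mem_Icc_of_abs_sub_le {α : Type*} [Nonempty α] {g : α → ℝ} {c : ℝ}
    (h : ∀ x x', |g x - g x'| ≤ c) : ∃ a, ∀ x, g x ∈ Set.Icc a (a + c) := by
  obtain ⟨x₀⟩ := ‹Nonempty α›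
  have hbdd : BddBelow (Set.range g) :=
    ⟨g x₀ - c, by rintro _ ⟨x, rfl⟩; linarith [(abs_le.1 (h x₀ x)).2]⟩
  refine ⟨⨅ x, g x, fun x => ⟨ciInf_le hbdd x, ?_⟩⟩
  have : g x - c ≤ ⨅ x', g x' := le_ciInf fun x' => by linarith [(abs_le.1 (h x x')).2]
  linarith

section ProbabilitySpace

variable {α : Type*} [MeasurableSpace α] {μ : Measure α} [IsProbabilityMeasure μ]

lemma integrable_of_abs_sub_le {g : α → ℝ} (hg : AEMeasurable g μ) {c : ℝ}
    (h : ∀ x x', |g x - g x'| ≤ c) : Integrable g μ :=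
  have := nonempty_of_isProbabilityMeasure μ
  let ⟨a, ha⟩ := exists_forall_mem_Icc_of_abs_sub_le h
  .of_mem_Icc a (a + c) hg (ae_of_all _ ha)

lemma abs_integral_sub_integral_le {g₁ g₂ : α → ℝ} (h₁ : Integrable g₁ μ) (h₂ : Integrable g₂ μ)
    {c : ℝ} (h : ∀ x, |g₁ x - g₂ x| ≤ c) : |∫ x, g₁ x ∂μ - ∫ x, g₂ x ∂μ| ≤ c := by
  rw [← integral_sub h₁ h₂]
  simpa using norm_integral_le_of_norm_le_const (μ := μ) (f := fun x => g₁ x - g₂ x)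
    (ae_of_all _ h)

lemma abs_sub_integral_le_of_abs_sub_le {g : α → ℝ} (hg : AEMeasurable g μ) {c : ℝ}
    (h : ∀ x x', |g x - g x'| ≤ c) (x : α) : |g x - ∫ x, g x ∂μ| ≤ c := by
  simpa using abs_integral_sub_integral_le (integrable_const (g x)) (integrable_of_abs_sub_le hg h)
    (h x)

lemma hasSubgaussianMGF_sub_integral_of_abs_sub_le {g : α → ℝ} (hg : AEMeasurable g μ) {c : ℝ≥0}
    (h : ∀ x x', |g x - g x'| ≤ c) :
    HasSubgaussianMGF (fun x => g x - ∫ x, g x ∂μ) ((c / 2) ^ 2) μ := by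
  have := nonempty_of_isProbabilityMeasure μ
  obtain ⟨a, ha⟩ := exists_forall_mem_Icc_of_abs_sub_le h
  simpa using hasSubgaussianMGF_of_mem_Icc hg (ae_of_all _ ha)

end ProbabilitySpace

lemma HasBoundedDifferences.integral {ι α : Type*} [MeasurableSpace α] {μ : Measure α}
    [IsProbabilityMeasure μ] {Ω : ι → Type*} {F : α → (∀ k, Ω k) → ℝ} {c : ι → ℝ}
    (hF : ∀ x, HasBoundedDifferences (F x) c) (hint : ∀ ω, Integrable (F · ω) μ) :
    HasBoundedDifferences (fun ω => ∫ x, F x ω ∂μ) c := fun k ω ω' h =>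
  abs_integral_sub_integral_le (hint ω) (hint ω') fun x => hF x k ω ω' h

lemma HasBoundedDifferences.comp_insertNth {n : ℕ} {Ω : Fin (n + 1) → Type*}
    {X : (∀ k, Ω k) → ℝ} {c : Fin (n + 1) → ℝ} (hX : HasBoundedDifferences X c)
    (i : Fin (n + 1)) (x : Ω i) :
    HasBoundedDifferences (fun r => X (Fin.insertNth i x r)) (fun k => c (i.succAbove k)) := by
  refine fun k r r' h => hX _ _ _ fun j hj => ?_
  rcases Fin.eq_self_or_eq_succAbove i j with rfl | ⟨j, rfl⟩
  · simp only [Fin.insertNth_apply_same]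
  · simp only [Fin.insertNth_apply_succAbove]
    exact h j fun hjk => hj (hjk ▸ rfl)

lemma HasBoundedDifferences.abs_sub_insertNth_le {n : ℕ} {Ω : Fin (n + 1) → Type*}
    {X : (∀ k, Ω k) → ℝ} {c : Fin (n + 1) → ℝ} (hX : HasBoundedDifferences X c)
    (i : Fin (n + 1)) (x x' : Ω i) (r : ∀ k, Ω (i.succAbove k)) :
    |X (Fin.insertNth i x r) - X (Fin.insertNth i x' r)| ≤ c i := by
  refine hX _ _ _ fun j hj => ?_
  obtain ⟨j, rfl⟩ := Fin.exists_succAbove_eq hj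
  simp only [Fin.insertNth_apply_succAbove]

section Product

variable {α β : Type*} [MeasurableSpace α] [MeasurableSpace β] {μ : Measure α} {ν : Measure β}
  [IsProbabilityMeasure μ] [IsProbabilityMeasure ν]

theorem hasSubgaussianMGF_prod_sub_integral {f : α × β → ℝ} (hf : Measurable f) {c cY : ℝ≥0}
    (hosc : ∀ x x' y, |f (x, y) - f (x', y)| ≤ c)
    (hY : HasSubgaussianMGF (fun y => ∫ x, f (x, y) ∂μ - ∫ y, ∫ x, f (x, y) ∂μ ∂ν) cY ν) :
    HasSubgaussianMGF (fun z => f z - ∫ z, f z ∂μ.prod ν) ((c / 2) ^ 2 + cY) (μ.prod ν) := by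
  set Y : β → ℝ := fun y => ∫ x, f (x, y) ∂μ
  set EY := ∫ y, Y y ∂ν
  have hfY (x : α) (y : β) : |f (x, y) - Y y| ≤ c :=
    abs_sub_integral_le_of_abs_sub_le (hf.comp measurable_prodMk_right).aemeasurable
      (hosc · · y) x
  have hsplit (t : ℝ) (z : α × β) :
      exp (t * (f z - EY)) = exp (t * (f z - Y z.2)) * exp (t * (Y z.2 - EY)) := by
    rw [← exp_add]; ring_nf
  have hint (t : ℝ) : Integrable (fun z => exp (t * (f z - EY))) (μ.prod ν) := by
    refine (((hY.integrable_exp_mul t).const_mul (exp (|t| * c))).comp_snd μ).mono'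
      (by fun_prop) (ae_of_all _ fun z => ?_)
    rw [norm_of_nonneg (exp_pos _).le, hsplit]
    refine mul_le_mul_of_nonneg_right (exp_le_exp.2 ?_) (exp_pos _).le
    calc t * (f z - Y z.2) ≤ |t| * |f z - Y z.2| := by rw [← abs_mul]; exact le_abs_self _
      _ ≤ |t| * c := by gcongr; exact hfY z.1 z.2
  have hsub : HasSubgaussianMGF (fun z => f z - EY) ((c / 2) ^ 2 + cY) (μ.prod ν) := by
    refine ⟨hint, fun t => ?_⟩
    calc mgf (fun z => f z - EY) (μ.prod ν) t
        = ∫ y, mgf (fun x => f (x, y) - Y y) μ t * exp (t * (Y y - EY)) ∂ν := by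
          rw [mgf, integral_prod_symm _ (hint t)]
          simp only [hsplit, integral_mul_const, mgf]
      _ ≤ ∫ y, exp ((c / 2) ^ 2 * t ^ 2 / 2) * exp (t * (Y y - EY)) ∂ν := by
          refine integral_mono_of_nonneg
            (ae_of_all _ fun y => mul_nonneg mgf_nonneg (exp_pos _).le)
            ((hY.integrable_exp_mul t).const_mul _) (ae_of_all _ fun y => ?_)
          refine mul_le_mul_of_nonneg_right ?_ (exp_pos _).le
          exact (hasSubgaussianMGF_sub_integral_of_abs_sub_le
            (hf.comp measurable_prodMk_right).aemeasurable (hosc · · y)).mgf_le t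
      _ = exp ((c / 2) ^ 2 * t ^ 2 / 2) * mgf (fun y => Y y - EY) ν t := integral_const_mul _ _
      _ ≤ exp ((c / 2) ^ 2 * t ^ 2 / 2) * exp (cY * t ^ 2 / 2) := by gcongr; exact hY.mgf_le t
      _ = exp (((c / 2) ^ 2 + cY : ℝ≥0) * t ^ 2 / 2) := by
          rw [← exp_add]; push_cast; ring_nf
  have hEf : ∫ z, f z ∂μ.prod ν = EY :=
    integral_prod_symm f ((hsub.integrable.add (integrable_const EY)).congr
      (ae_of_all _ fun z => sub_add_cancel (f z) EY))
  rwa [hEf]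

end Product

theorem hasSubgaussianMGF_pi_sub_integral {n : ℕ} {Ω : Fin n → Type*}
    [∀ k, MeasurableSpace (Ω k)] (μs : ∀ k, Measure (Ω k)) [∀ k, IsProbabilityMeasure (μs k)]
    {X : (∀ k, Ω k) → ℝ} (hX : Measurable X) {c : Fin n → ℝ≥0}
    (hbd : HasBoundedDifferences X fun k => (c k : ℝ)) :
    HasSubgaussianMGF (fun ω => X ω - ∫ ω, X ω ∂Measure.pi μs) (∑ k, (c k / 2) ^ 2)
      (Measure.pi μs) := by
  induction n with
  | zero =>
    have hX0 (ω : ∀ k, Ω k) : X ω = X (fun k => k.elim0) := congrArg X (Subsingleton.elim _ _)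
    have hconst (ω : ∀ k, Ω k) : X ω - ∫ ω, X ω ∂Measure.pi μs = 0 := by
      rw [integral_congr_ae (ae_of_all _ hX0), hX0 ω]
      simp
    simp [hconst]
  | succ n ih =>
    set e := MeasurableEquiv.piFinSuccAbove Ω 0
    have he := measurePreserving_piFinSuccAbove μs 0
    set f : Ω 0 × (∀ k, Ω (Fin.succAbove 0 k)) → ℝ := fun z => X (Fin.insertNth 0 z.1 z.2)
    have hf : Measurable f := hX.comp e.symm.measurable
    have hY := ih (fun k => μs (Fin.succAbove 0 k)) (X := fun r => ∫ x, f (x, r) ∂μs 0)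
      (hf.stronglyMeasurable.integral_prod_left'.measurable)
      (HasBoundedDifferences.integral (fun x => hbd.comp_insertNth 0 x) fun r =>
        integrable_of_abs_sub_le (hf.comp measurable_prodMk_right).aemeasurable
          (hbd.abs_sub_insertNth_le 0 · · r))
    have hprod := hasSubgaussianMGF_prod_sub_integral hf (hbd.abs_sub_insertNth_le 0) hY
    have hEf : ∫ z, f z ∂(μs 0).prod (Measure.pi fun k => μs (Fin.succAbove 0 k)) =
        ∫ ω, X ω ∂Measure.pi μs :=
      (he.symm e).integral_comp' X
    rw [hEf, ← he.map_eq] at hprod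
    rw [Fin.sum_univ_succAbove _ 0]
    refine (hprod.of_map e.measurable.aemeasurable).congr (ae_of_all _ fun ω => ?_)
    exact congrArg (fun ω => X ω - _) (e.symm_apply_apply ω)

/-- McDiarmid's bounded differences inequality: if `X` on a product probability
space is uniformly difference-bounded by `lam / m` (changing any single
coordinate changes `X` by at most `lam / m`), then for `τ > 0`,
`P(X - E[X] ≥ τ) ≤ exp(-2τ²m/lam²)`. -/
theorem mcdiarmid_inequality {m : ℕ} (hm : 0 < m) {Ω : Fin m → Type*}
    [∀ k, MeasurableSpace (Ω k)] (μs : ∀ k, Measure (Ω k))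
    [∀ k, IsProbabilityMeasure (μs k)]
    (X : (∀ k, Ω k) → ℝ) (hX : Measurable X)
    (lam : ℝ) (hlam : 0 < lam)
    (hbd : ∀ (k : Fin m) (ω ω' : ∀ k, Ω k),
      (∀ j, j ≠ k → ω j = ω' j) → |X ω - X ω'| ≤ lam / m)
    (τ : ℝ) (hτ : 0 < τ) :
    Measure.pi μs {ω | X ω - (∫ x, X x ∂(Measure.pi μs)) ≥ τ}
      ≤ ENNReal.ofReal (Real.exp (-(2 * τ ^ 2 * m) / lam ^ 2)) := by
  let c : ℝ≥0 := ⟨lam / m, by positivity⟩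
  have hsub := hasSubgaussianMGF_pi_sub_integral μs hX (c := fun _ => c) hbd
  have hparam :
      -τ ^ 2 / (2 * ((∑ _k : Fin m, (c / 2) ^ 2 : ℝ≥0) : ℝ)) = -(2 * τ ^ 2 * m) / lam ^ 2 := by
    have hc : (c : ℝ) = lam / m := rfl
    have hm' : (m : ℝ) ≠ 0 := by positivity
    simp only [Finset.sum_const, Finset.card_univ, Fintype.card_fin, nsmul_eq_mul]
    push_cast
    rw [hc]
    field_simp
  rw [← ofReal_measureReal (measure_ne_top _ _)]
  exact ENNReal.ofReal_le_ofReal (hparam ▸ hsub.measure_ge_le hτ.le)
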